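/- In the setup (G centerless, f, h : G → Aut(G) with h(σ) = conj(g(σ))∘f(σ), g a bijection satisfying g(στ) = g(σ)·f(σ)(g(τ)), and N = {ρ(g(σ))∘f(σ) : σ ∈ G} a normal subgroup of Hol(G)), suppose moreover that π ∈ Perm(G) satisfies N = πλ(G)π⁻¹ and that the normalizer of N in Perm(G) equals Hol(G). Then π² ∈ Hol(G) if and only if both of the following hold: (a) g(στ) ≡ g(τ)g(σ) (mod ker(f)) for all σ, τ ∈ G (g induces an anti-homomorphism from G to G/ker(f)); and (b) g(στ) ≡ g(σ)g(τ) (mod ker(h)) for all σ, τ ∈ G (g induces a homomorphism from G to G/ker(h)). -/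

import Mathlib

/-- The left regular representation `λ : G →* Perm G`, `λ(σ)(x) = σ·x`. -/
def lambda (G : Type*) [Group G] : G →* Equiv.Perm G where
  toFun σ := Equiv.mulLeft σ
  map_one' := by ext x; simp
  map_mul' σ τ := by ext x; simp [mul_assoc]

/-- The right regular representation `ρ : G →* Perm G`, `ρ(σ)(x) = x·σ⁻¹`. -/
def rho (G : Type*) [Group G] : G →* Equiv.Perm G where
  toFun σ := Equiv.mulRight σ⁻¹
  map_one' := by ext x; simp
  map_mul' σ τ := by ext x; simp [mul_assoc]

/-- The holomorph `Hol(G)`: the normalizer of `λ(G)` in `Perm G`. -/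
def Hol (G : Type*) [Group G] : Subgroup (Equiv.Perm G) :=
  Subgroup.normalizer ((lambda G).range : Set (Equiv.Perm G))

/-!
Conjugation by `p x = (g x)⁻¹` carries `λ(G)` onto `N`. As `N = πλ(G)π⁻¹` and `N`, `λ(G)` have
the same normalizer `Hol(G)`, the element `π⁻¹p` normalizes both, so `π² ∈ Hol(G)` iff
`p² ∈ Hol(G)`. The holomorph consists of the affine permutations `x ↦ a·α(x)`, and `p²` fixes `1`,
so this says that `x ↦ g((g x)⁻¹)` is an anti-homomorphism.

Normality of `N` under `Aut(G) ≤ Hol(G)` makes `f ∘ g⁻¹` equivariant for conjugation by `Aut(G)`;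
with the cocycle identity this makes `f ∘ g⁻¹` an anti-homomorphism, forces `h(G)` to commute with
`f(G)`, and then makes `h ∘ g⁻¹ = conj · (f ∘ g⁻¹)` a homomorphism. Since `G` is centerless, an
element is determined by its images under `f` and `h`; comparing these images splits the
anti-homomorphism condition into (a) and (b).
-/

open scoped Pointwise in
theorem Subgroup.sq_mem_normalizer_iff_of_map_conj_eq {M : Type*} [Group M]
    {L N : Subgroup M} {a b : M} (ha : N = L.map (MulAut.conj a).toMonoidHom)
    (hb : N = L.map (MulAut.conj b).toMonoidHom)
    (hN : normalizer (N : Set M) = normalizer (L : Set M)) :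
    a ^ 2 ∈ normalizer (L : Set M) ↔ b ^ 2 ∈ normalizer (L : Set M) := by
  have map_conj_eq_smul (x : M) (H : Subgroup M) :
      H.map (MulAut.conj x).toMonoidHom = ConjAct.toConjAct x • H := rfl
  rw [map_conj_eq_smul] at ha hb
  have hab : a⁻¹ * b ∈ normalizer (N : Set M) := by
    rw [hN, ← conjAct_pointwise_smul_iff, map_mul, mul_smul, ← hb, ha, map_inv, inv_smul_smul]
  have hba : ConjAct.toConjAct b • N = ConjAct.toConjAct a • N := by
    rw [← mul_inv_cancel_left a b, map_mul, mul_smul, conjAct_pointwise_smul_eq_self hab]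
  rw [← conjAct_pointwise_smul_iff, ← conjAct_pointwise_smul_iff, pow_two, pow_two, map_mul,
    map_mul, mul_smul, mul_smul, ← ha, ← hb, hba]

theorem MulAut.conj_injective_of_center_eq_bot {G : Type*} [Group G]
    (hZ : Subgroup.center G = ⊥) : Function.Injective (MulAut.conj : G → MulAut G) := by
  refine (injective_iff_map_eq_one _).2 fun z hz => ?_
  have hcentral : z ∈ Subgroup.center G := Subgroup.mem_center_iff.2 fun x =>
    (by simpa [mul_inv_eq_iff_eq_mul] using DFunLike.congr_fun hz x : z * x = x * z).symm
  rwa [hZ, Subgroup.mem_bot] at hcentral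

@[simp] lemma MulAut.toPerm_apply {G : Type*} [Group G] (α : MulAut G) (x : G) :
    MulAut.toPerm G α x = α x := rfl

section

variable {G : Type*} [Group G] {f h : G →* MulAut G} {g : Equiv.Perm G}

@[simp] lemma lambda_apply (σ x : G) : lambda G σ x = σ * x := rfl

@[simp] lemma rho_apply (σ x : G) : rho G σ x = x * σ⁻¹ := rfl

theorem mul_lambda_mul_inv_of_affine {q : Equiv.Perm G}
    (hq : ∀ a b, q (a * b) = q a * (q 1)⁻¹ * q b) (a : G) :
    q * lambda G a * q⁻¹ = lambda G (q a * (q 1)⁻¹) := by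
  ext x
  simp only [Equiv.Perm.mul_apply, lambda_apply, hq, Equiv.Perm.inv_def, Equiv.apply_symm_apply]

theorem mem_Hol_iff {q : Equiv.Perm G} :
    q ∈ Hol G ↔ ∀ a b, q (a * b) = q a * (q 1)⁻¹ * q b := by
  refine ⟨fun hq a b => ?_, fun hq => Subgroup.mem_normalizer_iff.2 fun p => ⟨?_, ?_⟩⟩
  · obtain ⟨c, hc⟩ := ((Subgroup.mem_normalizer_iff.1 hq) (lambda G a)).1 ⟨a, rfl⟩
    have hmul (x : G) : q (a * x) = c * q x := by
      simpa using (DFunLike.congr_fun hc (q x)).symm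
    have hc1 : q a = c * q 1 := by simpa using hmul 1
    rw [hmul, hc1, mul_inv_cancel_right]
  · rintro ⟨a, rfl⟩
    exact ⟨_, (mul_lambda_mul_inv_of_affine hq a).symm⟩
  · rintro ⟨c, hc⟩
    refine ⟨q.symm (c * q 1), ?_⟩
    have h := mul_lambda_mul_inv_of_affine hq (q.symm (c * q 1))
    rw [Equiv.apply_symm_apply, mul_inv_cancel_right, hc] at h
    exact mul_left_cancel (mul_right_cancel h)

theorem toPerm_mem_Hol (α : MulAut G) : MulAut.toPerm G α ∈ Hol G :=
  mem_Hol_iff.2 fun a b => by simp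

theorem rho_mul_toPerm_inj {u v : G} {β δ : MulAut G} :
    rho G u * MulAut.toPerm G β = rho G v * MulAut.toPerm G δ ↔ u = v ∧ β = δ := by
  refine ⟨fun H => ?_, fun ⟨huv, hβδ⟩ => huv ▸ hβδ ▸ rfl⟩
  have huv : u = v := by simpa using DFunLike.congr_fun H 1
  subst huv
  exact ⟨rfl, MulEquiv.ext fun x => by simpa using DFunLike.congr_fun H x⟩

theorem toPerm_conj_rho_mul_toPerm (α β : MulAut G) (u : G) :
    MulAut.toPerm G α * (rho G u * MulAut.toPerm G β) * (MulAut.toPerm G α)⁻¹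
      = rho G (α u) * MulAut.toPerm G (α * β * α⁻¹) := by
  ext x
  show α (β (α⁻¹ x) * u⁻¹) = α (β (α⁻¹ x)) * (α u)⁻¹
  rw [map_mul, map_inv]

theorem f_symm_aut_apply {N : Subgroup (Equiv.Perm G)}
    (hN : (N : Set (Equiv.Perm G)) = {q | ∃ σ : G, q = rho G (g σ) * MulAut.toPerm G (f σ)})
    (hNnorm : ∀ x ∈ Hol G, ∀ n ∈ N, x * n * x⁻¹ ∈ N) (α : MulAut G) (x : G) :
    f (g.symm (α x)) = α * f (g.symm x) * α⁻¹ := by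
  have hconj := hNnorm _ (toPerm_mem_Hol α)
    (rho G (g (g.symm x)) * MulAut.toPerm G (f (g.symm x)))
    (by rw [← SetLike.mem_coe, hN]; exact ⟨_, rfl⟩)
  rw [← SetLike.mem_coe, hN, toPerm_conj_rho_mul_toPerm] at hconj
  obtain ⟨τ, hτ⟩ := hconj
  obtain ⟨hατ, hfτ⟩ := rho_mul_toPerm_inj.1 hτ
  rw [Equiv.apply_symm_apply] at hατ
  rw [hατ, Equiv.symm_apply_apply, hfτ]

theorem f_symm_mul (hrel : ∀ σ τ : G, g (σ * τ) = g σ * (f σ) (g τ))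
    (hF : ∀ (α : MulAut G) (x : G), f (g.symm (α x)) = α * f (g.symm x) * α⁻¹) (x y : G) :
    f (g.symm (x * y)) = f (g.symm y) * f (g.symm x) := by
  obtain ⟨a, rfl⟩ := g.surjective x
  have hxy : g a * y = g (a * g.symm ((f a)⁻¹ y)) := by
    rw [hrel, Equiv.apply_symm_apply, MulAut.apply_inv_self]
  rw [hxy, Equiv.symm_apply_apply, Equiv.symm_apply_apply, map_mul, hF, inv_inv]
  group

theorem f_symm_inv (hg1 : g 1 = 1)
    (hrel : ∀ σ τ : G, g (σ * τ) = g σ * (f σ) (g τ))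
    (hF : ∀ (α : MulAut G) (x : G), f (g.symm (α x)) = α * f (g.symm x) * α⁻¹) (x : G) :
    f (g.symm x⁻¹) = (f (g.symm x))⁻¹ := by
  refine eq_inv_of_mul_eq_one_left ?_
  rw [← f_symm_mul hrel hF, mul_inv_cancel, ← hg1, Equiv.symm_apply_apply, map_one]

theorem commute_h_f (hg1 : g 1 = 1)
    (hrel : ∀ σ τ : G, g (σ * τ) = g σ * (f σ) (g τ))
    (hh : ∀ σ : G, h σ = MulAut.conj (g σ) * f σ)
    (hF : ∀ (α : MulAut G) (x : G), f (g.symm (α x)) = α * f (g.symm x) * α⁻¹) (z y : G) :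
    Commute (h z) (f y) := by
  have hzy : h z (g y) = g (z * y) * (g z)⁻¹ := by
    rw [hh, MulAut.mul_apply, MulAut.conj_apply, hrel]
  refine mul_inv_eq_iff_eq_mul.1 ?_
  calc h z * f y * (h z)⁻¹ = f (g.symm (h z (g y))) := by
        rw [hF, Equiv.symm_apply_apply]
    _ = (f z)⁻¹ * (f z * f y) := by
        rw [hzy, f_symm_mul hrel hF, f_symm_inv hg1 hrel hF,
          Equiv.symm_apply_apply, Equiv.symm_apply_apply, map_mul]
    _ = f y := inv_mul_cancel_left _ _

theorem h_symm_mul (hg1 : g 1 = 1)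
    (hrel : ∀ σ τ : G, g (σ * τ) = g σ * (f σ) (g τ))
    (hh : ∀ σ : G, h σ = MulAut.conj (g σ) * f σ)
    (hF : ∀ (α : MulAut G) (x : G), f (g.symm (α x)) = α * f (g.symm x) * α⁻¹) (x y : G) :
    h (g.symm (x * y)) = h (g.symm x) * h (g.symm y) := by
  have hcomm := (commute_h_f hg1 hrel hh hF (g.symm y) (g.symm x)).eq
  rw [hh (g.symm y), Equiv.apply_symm_apply] at hcomm
  rw [hh, hh, hh, Equiv.apply_symm_apply, Equiv.apply_symm_apply, Equiv.apply_symm_apply,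
    f_symm_mul hrel hF, map_mul, mul_assoc (MulAut.conj x) (f (g.symm x)), ← hcomm]
  simp only [mul_assoc]

theorem eq_iff_f_eq_and_h_eq (hZ : Subgroup.center G = ⊥)
    (hh : ∀ σ : G, h σ = MulAut.conj (g σ) * f σ) (σ τ : G) :
    σ = τ ↔ f σ = f τ ∧ h σ = h τ := by
  refine ⟨fun hστ => hστ ▸ ⟨rfl, rfl⟩, fun ⟨hf, hh'⟩ => g.injective ?_⟩
  refine MulAut.conj_injective_of_center_eq_bot hZ ?_
  rw [← mul_inv_eq_of_eq_mul (hh σ), ← mul_inv_eq_of_eq_mul (hh τ), hf, hh']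

theorem apply_mul_inv_eq_iff (hZ : Subgroup.center G = ⊥) (hg1 : g 1 = 1)
    (hrel : ∀ σ τ : G, g (σ * τ) = g σ * (f σ) (g τ))
    (hh : ∀ σ : G, h σ = MulAut.conj (g σ) * f σ)
    (hF : ∀ (α : MulAut G) (x : G), f (g.symm (α x)) = α * f (g.symm x) * α⁻¹) (σ y : G) :
    g (f σ y * (g σ)⁻¹) = g y * g (g σ)⁻¹ ↔
      f (g σ) * f (f σ y) = f y * f (g σ) ∧ h (f σ y) = h y := by
  rw [← Equiv.eq_symm_apply, eq_iff_f_eq_and_h_eq hZ hh, f_symm_mul hrel hF,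
    h_symm_mul hg1 hrel hh hF, Equiv.symm_apply_apply, Equiv.symm_apply_apply, map_mul, map_mul,
    map_inv, map_inv, mul_left_inj, mul_inv_eq_iff_eq_mul, mul_assoc,
    eq_inv_mul_iff_mul_eq]

theorem conj_lambda_eq_rho_mul_toPerm (hrel : ∀ σ τ : G, g (σ * τ) = g σ * (f σ) (g τ))
    (σ : G) :
    g.trans (Equiv.inv G) * lambda G σ * (g.trans (Equiv.inv G))⁻¹
      = rho G (g σ) * MulAut.toPerm G (f σ) := by
  ext x
  show (g (σ * g.symm x⁻¹))⁻¹ = f σ x * (g σ)⁻¹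
  rw [hrel, Equiv.apply_symm_apply, map_inv, mul_inv_rev, inv_inv]

theorem map_conj_lambda_range_eq {N : Subgroup (Equiv.Perm G)}
    (hrel : ∀ σ τ : G, g (σ * τ) = g σ * (f σ) (g τ))
    (hN : (N : Set (Equiv.Perm G)) = {q | ∃ σ : G, q = rho G (g σ) * MulAut.toPerm G (f σ)}) :
    (lambda G).range.map (MulAut.conj (g.trans (Equiv.inv G))).toMonoidHom = N := by
  refine SetLike.coe_injective ?_
  rw [hN, MonoidHom.map_range]
  ext q
  simp [conj_lambda_eq_rho_mul_toPerm hrel, eq_comm]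

theorem trans_inv_sq_mem_Hol_iff (hg1 : g 1 = 1)
    (hrel : ∀ σ τ : G, g (σ * τ) = g σ * (f σ) (g τ)) :
    g.trans (Equiv.inv G) ^ 2 ∈ Hol G ↔ ∀ σ y, g (f σ y * (g σ)⁻¹) = g y * g (g σ)⁻¹ := by
  have sq_apply (x : G) : (g.trans (Equiv.inv G) ^ 2) x = (g (g x)⁻¹)⁻¹ := rfl
  simp only [mem_Hol_iff, sq_apply, hg1, inv_one, mul_one, ← mul_inv_rev, inv_inj]
  refine forall_congr' fun σ => ?_
  refine Iff.trans (forall_congr' fun τ => ?_) (g.trans (Equiv.inv G)).forall_congr_right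
  rw [Equiv.trans_apply, Equiv.inv_apply, hrel σ τ, mul_inv_rev, map_inv (f σ)]

theorem inv_mul_mem_ker_f_iff (hrel : ∀ σ τ : G, g (σ * τ) = g σ * (f σ) (g τ)) (σ τ : G) :
    (g (σ * τ))⁻¹ * (g τ * g σ) ∈ f.ker ↔ f (g σ) * f (f σ (g τ)) = f (g τ) * f (g σ) := by
  rw [← MonoidHom.eq_iff, hrel, map_mul, map_mul, eq_comm]

theorem inv_mul_mem_ker_h_iff (hrel : ∀ σ τ : G, g (σ * τ) = g σ * (f σ) (g τ)) (σ τ : G) :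
    (g (σ * τ))⁻¹ * (g σ * g τ) ∈ h.ker ↔ h (f σ (g τ)) = h (g τ) := by
  rw [← MonoidHom.eq_iff, hrel, map_mul, map_mul, mul_right_inj, eq_comm]

end

theorem pi_sq_mem_Hol_iff_general
    (G : Type*) [Group G] (hZ : Subgroup.center G = ⊥)
    (f h : G →* MulAut G) (g : Equiv.Perm G) (hg1 : g 1 = 1)
    (hrel : ∀ σ τ : G, g (σ * τ) = g σ * (f σ) (g τ))
    (hh : ∀ σ : G, h σ = MulAut.conj (g σ) * f σ)
    (N : Subgroup (Equiv.Perm G))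
    (hN : (N : Set (Equiv.Perm G))
      = {q | ∃ σ : G, q = rho G (g σ) * MulAut.toPerm G (f σ)})
    (hNnorm : ∀ x ∈ Hol G, ∀ n ∈ N, x * n * x⁻¹ ∈ N)
    (pi : Equiv.Perm G)
    (hpiN : N = Subgroup.map (MulAut.conj pi).toMonoidHom (lambda G).range)
    (hNnormalizer : Subgroup.normalizer (N : Set (Equiv.Perm G)) = Hol G)
    :
    pi ^ 2 ∈ Hol G ↔
      ((∀ σ τ : G, (g (σ * τ))⁻¹ * (g τ * g σ) ∈ f.ker) ∧
        (∀ σ τ : G, (g (σ * τ))⁻¹ * (g σ * g τ) ∈ h.ker)) := by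
  have hF := f_symm_aut_apply hN hNnorm
  refine ((Subgroup.sq_mem_normalizer_iff_of_map_conj_eq hpiN
    (map_conj_lambda_range_eq hrel hN).symm hNnormalizer).trans
      (trans_inv_sq_mem_Hol_iff hg1 hrel)).trans ?_
  simp only [apply_mul_inv_eq_iff hZ hg1 hrel hh hF, inv_mul_mem_ker_f_iff hrel,
    inv_mul_mem_ker_h_iff hrel, ← forall_and]
  exact forall_congr' fun σ => g.forall_congr_right.symm

/-- In the setup, if moreover `π ∈ Perm(G)` satisfies `N = πλ(G)π⁻¹`
and the normalizer of `N` in `Perm(G)` is `Hol(G)`, then `π² ∈ Hol(G)` if and only if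
(a) `g(στ) ≡ g(τ)g(σ) (mod ker f)` for all `σ, τ` and
(b) `g(στ) ≡ g(σ)g(τ) (mod ker h)` for all `σ, τ`. -/
theorem pi_sq_mem_Hol_iff
    (G : Type*) [Group G] (hZ : Subgroup.center G = ⊥)
    (f h : G →* MulAut G) (g : Equiv.Perm G) (hg1 : g 1 = 1)
    (hrel : ∀ σ τ : G, g (σ * τ) = g σ * (f σ) (g τ))
    (hh : ∀ σ : G, h σ = MulAut.conj (g σ) * f σ)
    (N : Subgroup (Equiv.Perm G))
    (hN : (N : Set (Equiv.Perm G))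
      = {q | ∃ σ : G, q = rho G (g σ) * MulAut.toPerm G (f σ)})
    (hNle : N ≤ Hol G)
    (hNnorm : ∀ x ∈ Hol G, ∀ n ∈ N, x * n * x⁻¹ ∈ N)
    (pi : Equiv.Perm G)
    (hpiN : N = Subgroup.map (MulAut.conj pi).toMonoidHom (lambda G).range)
    (hNnormalizer : Subgroup.normalizer (N : Set (Equiv.Perm G)) = Hol G)
    :
    pi ^ 2 ∈ Hol G ↔
      ((∀ σ τ : G, (g (σ * τ))⁻¹ * (g τ * g σ) ∈ f.ker) ∧
        (∀ σ τ : G, (g (σ * τ))⁻¹ * (g σ * g τ) ∈ h.ker)) :=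
  pi_sq_mem_Hol_iff_general G hZ f h g hg1 hrel hh N hN hNnorm pi hpiN hNnormalizer
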